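/- Let τ₁ > 1 be a real number and τ₂ a real number. The matrix B(τ₁, τ₂) is positive semidefinite if and only if τ₂ ≥ 4. (In terms of the Almgren–Chriss model, with τ₁ = T_post/T and τ₂ = T/t, this characterizes exactly when the three-point sampling (P_t, P_T, P_{T_post}) dominates the (I, J) statistics in Fisher information.) -/

import Mathlib

open Matrix

/-- The matrix `B(τ₁, τ₂)` from the proof of the paper's main Almgren–Chriss theorem,
with `τ₁ = T_post/T` and `τ₂ = T/t`. -/
noncomputable def Bmat (τ₁ τ₂ : ℝ) : Matrix (Fin 2) (Fin 2) ℝ :=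
  !![1 - (τ₁ / 4 - 1 / 6) / (τ₁ / 3 - 1 / 4), 1 - (τ₁ / 2 - 1 / 2) / (τ₁ / 3 - 1 / 4);
     1 - (τ₁ / 2 - 1 / 2) / (τ₁ / 3 - 1 / 4), τ₂ + 1 / (τ₁ - 1) - τ₁ / (τ₁ / 3 - 1 / 4)]

/-!
Completing the square, a symmetric `2 × 2` matrix with positive `(1,1)` entry is positive
semidefinite iff its determinant is nonnegative. For `B(τ₁, τ₂)` the `(1,1)` entry is
`(τ₁ - 1)/(4τ₁ - 3) > 0`, and since `12τ₁(τ₁ - 1) + (2τ₁ - 3)² = (4τ₁ - 3)²` the determinant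
collapses to `(τ₁ - 1)(τ₂ - 4)/(4τ₁ - 3)`, whose sign is that of `τ₂ - 4`.
-/

namespace Matrix

variable {𝕜 : Type*} [Field 𝕜] [LinearOrder 𝕜] [IsStrictOrderedRing 𝕜] [StarRing 𝕜]
  [TrivialStar 𝕜]

omit [LinearOrder 𝕜] [IsStrictOrderedRing 𝕜] in
theorem mul_dotProduct_mulVec_fin_two (a b d : 𝕜) (x : Fin 2 → 𝕜) :
    a * (star x ⬝ᵥ (!![a, b; b, d] *ᵥ x)) =
      (a * x 0 + b * x 1) ^ 2 + !![a, b; b, d].det * x 1 ^ 2 := by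
  simp only [star_trivial, dotProduct, mulVec, Fin.sum_univ_two, det_fin_two_of, of_apply,
    cons_val', cons_val_zero, cons_val_one, empty_val', cons_val_fin_one]
  ring

theorem posSemidef_fin_two_iff {a b d : 𝕜} (ha : 0 < a) :
    !![a, b; b, d].PosSemidef ↔ 0 ≤ !![a, b; b, d].det := by
  constructor
  · intro hM
    -- the vector `(-b, a)` makes the completed square vanish
    have key : a * (star ![-b, a] ⬝ᵥ (!![a, b; b, d] *ᵥ ![-b, a])) =
        !![a, b; b, d].det * a ^ 2 := by
      rw [mul_dotProduct_mulVec_fin_two]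
      simp only [cons_val_zero, cons_val_one]
      ring
    refine nonneg_of_mul_nonneg_left ?_ (pow_pos ha 2)
    rw [← key]
    exact mul_nonneg ha.le (hM.dotProduct_mulVec_nonneg _)
  · intro hdet
    refine PosSemidef.of_dotProduct_mulVec_nonneg ?_ fun x => ?_
    · simp [isHermitian_iff_isSymm, IsSymm.ext_iff, Fin.forall_fin_two]
    · refine nonneg_of_mul_nonneg_right ?_ ha
      rw [mul_dotProduct_mulVec_fin_two]
      positivity

end Matrix

section Bmat

variable {τ₁ : ℝ} (τ₂ : ℝ)

theorem Bmat_eq (h : 4 * τ₁ - 3 ≠ 0) :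
    Bmat τ₁ τ₂ = !![(τ₁ - 1) / (4 * τ₁ - 3), (3 - 2 * τ₁) / (4 * τ₁ - 3);
      (3 - 2 * τ₁) / (4 * τ₁ - 3), τ₂ + 1 / (τ₁ - 1) - 12 * τ₁ / (4 * τ₁ - 3)] := by
  -- `field_simp` normalizes `4 * τ₁` to `τ₁ * 4` and looks for that side condition
  rw [mul_comm] at h
  rw [Bmat]
  congr 5 <;> field_simp <;> ring

theorem Bmat_det (h₁ : τ₁ - 1 ≠ 0) (h₂ : 4 * τ₁ - 3 ≠ 0) :
    (Bmat τ₁ τ₂).det = (τ₁ - 1) * (τ₂ - 4) / (4 * τ₁ - 3) := by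
  rw [Bmat_eq τ₂ h₂, det_fin_two_of]
  rw [mul_comm] at h₂
  field_simp
  ring

end Bmat

/-- For `τ₁ > 1`, the matrix `B(τ₁, τ₂)` is positive semidefinite if and only if `τ₂ ≥ 4`. -/
theorem Bmat_posSemidef_iff (τ₁ τ₂ : ℝ) (hτ₁ : 1 < τ₁) :
    (Bmat τ₁ τ₂).PosSemidef ↔ 4 ≤ τ₂ := by
  have h₁ : 0 < τ₁ - 1 := by linarith
  have h₂ : 0 < 4 * τ₁ - 3 := by linarith
  rw [Bmat_eq τ₂ h₂.ne', posSemidef_fin_two_iff (div_pos h₁ h₂), ← Bmat_eq τ₂ h₂.ne',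
    Bmat_det τ₂ h₁.ne' h₂.ne', le_div_iff₀ h₂, zero_mul, mul_nonneg_iff_of_pos_left h₁,
    sub_nonneg]
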